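/- Suppose L_V* ≥ (m/2)·α·R with R = h·tan δ and α > 0, each detour-augmented tour satisfies L_d ≤ (1+ε)(L_V* + 2 m_d ρ) + 2 m_d π ρ with ρ = (h−l)·tan δ, and m_d ≤ (2h/(h−l))² m. Then L_d ≤ ((1+ε)(1 + 16h/(α(h−l))) + 16π h/(α(h−l)))·L_V*. -/
import Mathlib


open Real

/-- The algebraic content of Theorem 1: chaining the lower bound
`L_V* ≥ (m/2)·α·R`, the upper bound
`L_d ≤ (1+ε)(L_V* + 2 m_d ρ) + 2 m_d π ρ`, and the packing bound
`m_d ≤ (2h/(h−l))² m` yields the constant-factor guarantee. -/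
theorem approximation_factor_chain
    (h l δ ε α L_V L_d : ℝ) (m m_d : ℕ)
    (hl : 0 < l) (hlh : l < h) (hδ : δ ∈ Set.Ioo 0 (Real.pi / 2))
    (hε : 0 ≤ ε) (hα : 0 < α) (hm : 1 ≤ m) (hLV : 0 < L_V)
    (hlower : (m : ℝ) / 2 * α * (h * Real.tan δ) ≤ L_V)
    (hupper : L_d ≤ (1 + ε) * (L_V + 2 * m_d * ((h - l) * Real.tan δ))
        + 2 * m_d * Real.pi * ((h - l) * Real.tan δ))
    (hpack : (m_d : ℝ) ≤ (2 * h / (h - l)) ^ 2 * m) :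
    L_d ≤ ((1 + ε) * (1 + 16 * h / (α * (h - l)))
        + 16 * Real.pi * h / (α * (h - l))) * L_V := by
  obtain ⟨hδ0, hδ2⟩ := hδ
  have ht : 0 < Real.tan δ := Real.tan_pos_of_pos_of_lt_pi_div_two hδ0 hδ2
  have hhl : 0 < h - l := by linarith
  have hh : 0 < h := hl.trans hlh
  have hπ : 0 < Real.pi := Real.pi_pos
  have hmd0 : (0:ℝ) ≤ (m_d : ℝ) := Nat.cast_nonneg _
  have key : 2 * (m_d : ℝ) * ((h - l) * Real.tan δ) ≤ 16 * h / (α * (h - l)) * L_V := by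
    have h2 : (m : ℝ) * Real.tan δ ≤ 2 * L_V / (α * h) := by
      rw [le_div_iff₀ (by positivity)]
      nlinarith
    calc 2 * (m_d : ℝ) * ((h - l) * Real.tan δ)
        ≤ 2 * ((2 * h / (h - l)) ^ 2 * m) * ((h - l) * Real.tan δ) := by
          have := mul_le_mul_of_nonneg_right hpack (by positivity : (0:ℝ) ≤ (h - l) * Real.tan δ)
          nlinarith
      _ = (8 * h ^ 2 / (h - l)) * ((m : ℝ) * Real.tan δ) := by field_simp; ring
      _ ≤ (8 * h ^ 2 / (h - l)) * (2 * L_V / (α * h)) := by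
          exact mul_le_mul_of_nonneg_left h2 (by positivity)
      _ = 16 * h / (α * (h - l)) * L_V := by field_simp; ring
  have hπmul : 2 * (m_d : ℝ) * Real.pi * ((h - l) * Real.tan δ)
      ≤ Real.pi * (16 * h / (α * (h - l)) * L_V) := by
    calc 2 * (m_d : ℝ) * Real.pi * ((h - l) * Real.tan δ)
        = Real.pi * (2 * (m_d : ℝ) * ((h - l) * Real.tan δ)) := by ring
      _ ≤ Real.pi * (16 * h / (α * (h - l)) * L_V) :=
          mul_le_mul_of_nonneg_left key hπ.le
  have h1ε : (0:ℝ) ≤ 1 + ε := by linarith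
  calc L_d ≤ (1 + ε) * (L_V + 2 * m_d * ((h - l) * Real.tan δ))
        + 2 * m_d * Real.pi * ((h - l) * Real.tan δ) := hupper
    _ ≤ (1 + ε) * (L_V + 16 * h / (α * (h - l)) * L_V)
        + Real.pi * (16 * h / (α * (h - l)) * L_V) := by
        have := mul_le_mul_of_nonneg_left (add_le_add_left key L_V) h1ε
        linarith
    _ = ((1 + ε) * (1 + 16 * h / (α * (h - l)))
        + 16 * Real.pi * h / (α * (h - l))) * L_V := by ring
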